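/- Let α, β ∈ ℝ \ {0} and let z ∈ ℝ satisfy |α+β| > |z|/2 or |α| > |z/2 − β|. Then the cubic equation β⁴v³ + (P*(z) + Q*(z))β²v² + (P*(z)Q*(z) + β² − α²)v + P*(z) = 0 has no real solutions v ∈ ℝ. -/
import Mathlib


noncomputable section

/-- The function `P*(z)` from the paper. -/
def Pstar (α β z : ℝ) : ℂ :=
  if 0 ≤ z^2 - 4*(α+β)^2 then
    ((z/2 + Real.sign z * Real.sqrt (z^2 - 4*(α+β)^2) / 2 : ℝ) : ℂ)
  else ((z/2 : ℝ) : ℂ) + Complex.I * ((Real.sqrt (4*(α+β)^2 - z^2) / 2 : ℝ) : ℂ)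

/-- The function `Q*(z)` from the paper. -/
def Qstar (α β z : ℝ) : ℂ :=
  if 0 ≤ z^2 - 4*β*z + 4*(β^2 - α^2) then
    ((z/2 + β + Real.sign (z - 2*β) * Real.sqrt (z^2 - 4*β*z + 4*(β^2 - α^2)) / 2 : ℝ) : ℂ)
  else ((z/2 + β : ℝ) : ℂ)
    + Complex.I * ((Real.sqrt (4*β*z - z^2 - 4*(β^2 - α^2)) / 2 : ℝ) : ℂ)

lemma key_extract (x1 y1 x2 y2 x3 : ℝ)
    (h : (((x1:ℝ):ℂ) + Complex.I*((y1:ℝ):ℂ)) * (((x2:ℝ):ℂ) + Complex.I*((y2:ℝ):ℂ)) = ((x3:ℝ):ℂ)) :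
    x1*x2 - y1*y2 = x3 ∧ x1*y2 + y1*x2 = 0 := by
  constructor
  · have := congrArg Complex.re h
    simpa using this
  · have := congrArg Complex.im h
    simpa using this

lemma sign_sq (z : ℝ) (hz : z ≠ 0) : Real.sign z * Real.sign z = 1 := by
  rcases hz.lt_or_gt with h | h
  · rw [Real.sign_of_neg h]; ring
  · rw [Real.sign_of_pos h]; ring

lemma sign_mul_abs' (z : ℝ) : Real.sign z * |z| = z := by
  rcases lt_trichotomy z 0 with h | h | h
  · rw [Real.sign_of_neg h, abs_of_neg h]; ring
  · simp [h]
  · rw [Real.sign_of_pos h, abs_of_pos h]; ring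

set_option maxHeartbeats 1000000 in
/-- If `|α+β| > |z|/2` or `|α| > |z/2 − β|` then the cubic
`β⁴v³ + (P*(z)+Q*(z))β²v² + (P*(z)Q*(z)+β²−α²)v + P*(z) = 0` has no real solutions. -/
theorem cubic_no_real_solutions
    (α β : ℝ) (hα : α ≠ 0) (hβ : β ≠ 0) (z : ℝ)
    (hz : |α + β| > |z|/2 ∨ |α| > |z/2 - β|) :
    ∀ v : ℝ,
      (β:ℂ)^4 * (v:ℂ)^3 + (Pstar α β z + Qstar α β z) * (β:ℂ)^2 * (v:ℂ)^2
        + (Pstar α β z * Qstar α β z + (β:ℂ)^2 - (α:ℂ)^2) * (v:ℂ)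
        + Pstar α β z ≠ 0 := by
  intro v hE
  have hα2 : (0:ℝ) < α^2 := by positivity
  -- factored form
  have hfac : ((β:ℂ)^2*(v:ℂ) + Pstar α β z) * ((β:ℂ)^2*(v:ℂ)^2 + Qstar α β z*(v:ℂ) + 1)
      = (α:ℂ)^2*(v:ℂ) := by linear_combination hE
  by_cases hP : 0 ≤ z^2 - 4*(α+β)^2
  · by_cases hQ : 0 ≤ z^2 - 4*β*z + 4*(β^2 - α^2)
    · -- both real: contradicts hypothesis
      rcases hz with h | h
      · nlinarith [sq_abs (α+β), sq_abs z, abs_nonneg z]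
      · nlinarith [sq_abs α, sq_abs (z/2-β), abs_nonneg (z/2-β)]
    · -- P real, Q complex
      have hz0 : z ≠ 0 := by
        intro h0
        have hab : α + β = 0 := by nlinarith [sq_nonneg (α+β)]
        rcases hz with h | h
        · rw [hab, h0] at h; simp at h
        · have hab' : α = -β := by linarith
          rw [hab', h0] at h
          rw [show (0:ℝ)/2 - β = -β by ring] at h
          simp at h
      set P₀ : ℝ := z/2 + Real.sign z * Real.sqrt (z^2 - 4*(α+β)^2) / 2 with hP₀def
      have hP0 : P₀ * (z - P₀) = (α+β)^2 := by
        have hs := sign_sq z hz0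
        have hr := Real.mul_self_sqrt hP
        rw [hP₀def]
        nlinarith [hs, hr]
      have hP0ne : P₀ ≠ 0 := by
        intro h0
        rw [h0] at hP0
        have hab : α + β = 0 := by nlinarith [sq_nonneg (α+β)]
        have hD : z^2 - 4*(α+β)^2 = z^2 := by rw [hab]; ring
        have hPz : P₀ = z := by
          rw [hP₀def, hD, Real.sqrt_sq_eq_abs]
          have := sign_mul_abs' z
          linarith
        rw [h0] at hPz
        exact hz0 hPz.symm
      set q : ℝ := Real.sqrt (4*β*z - z^2 - 4*(β^2 - α^2)) / 2 with hqdef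
      have hq : 0 < q := by
        apply half_pos
        apply Real.sqrt_pos.mpr
        linarith [not_le.mp hQ]
      have hPval : Pstar α β z = ((P₀:ℝ):ℂ) := by rw [Pstar, if_pos hP]
      have hQval : Qstar α β z = ((z/2 + β:ℝ):ℂ) + Complex.I * ((q:ℝ):ℂ) := by
        rw [Qstar, if_neg hQ]
      rw [hPval, hQval] at hfac
      have h2 : (((β^2*v + P₀ : ℝ):ℂ) + Complex.I*(((0:ℝ)):ℂ))
          * (((β^2*v^2 + (z/2+β)*v + 1 : ℝ):ℂ) + Complex.I*(((q*v:ℝ)):ℂ))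
          = ((α^2*v : ℝ):ℂ) := by
        push_cast at hfac ⊢
        linear_combination hfac
      obtain ⟨hre, him⟩ := key_extract _ _ _ _ _ h2
      -- him : (β²v+P₀)(qv) = 0
      have him' : (β^2*v + P₀) * (q*v) = 0 := by linear_combination him
      rcases mul_eq_zero.mp him' with h | h
      · -- β²v + P₀ = 0
        have h0 : α^2 * v = 0 := by
          linear_combination (β^2*v^2 + (z/2+β)*v + 1) * h - hre
        have hv : v = 0 := by
          rcases mul_eq_zero.mp h0 with h' | h'
          · exact absurd h' (ne_of_gt hα2)
          · exact h'
        rw [hv] at h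
        apply hP0ne
        linear_combination h
      · -- q*v = 0, so v = 0
        have hv : v = 0 := by
          rcases mul_eq_zero.mp h with h' | h'
          · exact absurd h' (ne_of_gt hq)
          · exact h'
        rw [hv] at hre
        apply hP0ne
        linear_combination hre
  · by_cases hQ : 0 ≤ z^2 - 4*β*z + 4*(β^2 - α^2)
    · -- P complex, Q real
      set p : ℝ := Real.sqrt (4*(α+β)^2 - z^2) / 2 with hpdef
      have hp : 0 < p := by
        apply half_pos
        apply Real.sqrt_pos.mpr
        linarith [not_le.mp hP]
      set Q₀ : ℝ := z/2 + β + Real.sign (z - 2*β) * Real.sqrt (z^2 - 4*β*z + 4*(β^2 - α^2)) / 2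
        with hQ₀def
      have hPval : Pstar α β z = ((z/2:ℝ):ℂ) + Complex.I * ((p:ℝ):ℂ) := by
        rw [Pstar, if_neg hP]
      have hQval : Qstar α β z = ((Q₀:ℝ):ℂ) := by rw [Qstar, if_pos hQ]
      rw [hPval, hQval] at hfac
      have h2 : (((β^2*v + z/2 : ℝ):ℂ) + Complex.I*(((p:ℝ)):ℂ))
          * (((β^2*v^2 + Q₀*v + 1 : ℝ):ℂ) + Complex.I*(((0:ℝ)):ℂ))
          = ((α^2*v : ℝ):ℂ) := by
        push_cast at hfac ⊢
        linear_combination hfac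
      obtain ⟨hre, him⟩ := key_extract _ _ _ _ _ h2
      -- him : p * (β²v²+Q₀v+1) = 0
      have hquad : β^2*v^2 + Q₀*v + 1 = 0 := by
        have him' : p * (β^2*v^2 + Q₀*v + 1) = 0 := by linear_combination him
        rcases mul_eq_zero.mp him' with h' | h'
        · exact absurd h' (ne_of_gt hp)
        · exact h'
      have h0 : α^2 * v = 0 := by
        linear_combination (β^2*v + z/2) * hquad - hre
      have hv : v = 0 := by
        rcases mul_eq_zero.mp h0 with h' | h'
        · exact absurd h' (ne_of_gt hα2)
        · exact h'
      rw [hv] at hquad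
      norm_num at hquad
    · -- both complex
      set p : ℝ := Real.sqrt (4*(α+β)^2 - z^2) / 2 with hpdef
      have hp : 0 < p := by
        apply half_pos
        apply Real.sqrt_pos.mpr
        linarith [not_le.mp hP]
      set q : ℝ := Real.sqrt (4*β*z - z^2 - 4*(β^2 - α^2)) / 2 with hqdef
      have hq : 0 < q := by
        apply half_pos
        apply Real.sqrt_pos.mpr
        linarith [not_le.mp hQ]
      have hPval : Pstar α β z = ((z/2:ℝ):ℂ) + Complex.I * ((p:ℝ):ℂ) := by
        rw [Pstar, if_neg hP]
      have hQval : Qstar α β z = ((z/2 + β:ℝ):ℂ) + Complex.I * ((q:ℝ):ℂ) := by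
        rw [Qstar, if_neg hQ]
      rw [hPval, hQval] at hfac
      have h2 : (((β^2*v + z/2 : ℝ):ℂ) + Complex.I*(((p:ℝ)):ℂ))
          * (((β^2*v^2 + (z/2+β)*v + 1 : ℝ):ℂ) + Complex.I*(((q*v:ℝ)):ℂ))
          = ((α^2*v : ℝ):ℂ) := by
        push_cast at hfac ⊢
        linear_combination hfac
      obtain ⟨hre, him⟩ := key_extract _ _ _ _ _ h2
      have key2 : v * (q*(β^2*v+z/2)^2 + p*α^2 + p^2*q) = 0 := by
        linear_combination (β^2*v+z/2) * him - p * hre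
      have hbr : 0 < q*(β^2*v+z/2)^2 + p*α^2 + p^2*q := by positivity
      have hv : v = 0 := by
        rcases mul_eq_zero.mp key2 with h | h
        · exact h
        · linarith
      rw [hv] at him
      have hp0 : p = 0 := by linear_combination him
      linarith

end
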